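/- Assume char k ≠ 2. Let σ ∈ Gal(K/k) and V := K_σ ⊕ K_σ. Then Aut(V), i.e. the group of K ⊗_k K-module automorphisms of V modulo the subgroup of automorphisms of the form v ↦ a·v·b with a, b ∈ K^×, is isomorphic as a group to PGL₂(K) = GL₂(K)/Z(GL₂(K)). -/

import Mathlib

open TensorProduct

noncomputable section

variable (k K : Type*) [Field k] [Field K] [Algebra k K]

/-- The two-sided vector space `K_σ`: the underlying set is `K`, and the `K ⊗[k] K`-module
structure is given by `(a ⊗ b) • x = a * x * σ b`. -/
def Kst (σ : K ≃ₐ[k] K) : Type _ := K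

instance (σ : K ≃ₐ[k] K) : AddCommGroup (Kst k K σ) := inferInstanceAs (AddCommGroup K)

instance (σ : K ≃ₐ[k] K) : One (Kst k K σ) := inferInstanceAs (One K)

instance (σ : K ≃ₐ[k] K) : Module (K ⊗[k] K) (Kst k K σ) :=
  Module.compHom K (Algebra.TensorProduct.productMap (AlgHom.id k K) σ.toAlgHom).toRingHom

/-- The subgroup of "inner" automorphisms of a two-sided vector space `V`, i.e. those of the
form `v ↦ a • v • b` for nonzero `a, b ∈ K`. -/
def innerAut (V : Type*) [AddCommGroup V] [Module (K ⊗[k] K) V] :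
    Subgroup (V ≃ₗ[K ⊗[k] K] V) where
  carrier := {f | ∃ a b : Kˣ, ∀ v : V, f v = (((a : K) ⊗ₜ[k] (b : K)) : K ⊗[k] K) • v}
  one_mem' := ⟨1, 1, fun v => by
    show v = _
    rw [Units.val_one, ← Algebra.TensorProduct.one_def, one_smul]⟩
  mul_mem' := by
    rintro f g ⟨a, b, hf⟩ ⟨c, d, hg⟩
    refine ⟨c * a, d * b, fun v => ?_⟩
    show f (g v) = _
    rw [hg, map_smul, hf, smul_smul, Algebra.TensorProduct.tmul_mul_tmul,
      Units.val_mul, Units.val_mul]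
  inv_mem' := by
    rintro f ⟨a, b, hf⟩
    refine ⟨a⁻¹, b⁻¹, fun v => ?_⟩
    apply f.injective
    show f (f.symm v) = _
    rw [f.apply_symm_apply, hf, smul_smul, Algebra.TensorProduct.tmul_mul_tmul]
    rw [Units.val_inv_eq_inv_val, Units.val_inv_eq_inv_val, mul_inv_cancel₀ a.ne_zero,
      mul_inv_cancel₀ b.ne_zero, ← Algebra.TensorProduct.one_def, one_smul]

instance (V : Type*) [AddCommGroup V] [Module (K ⊗[k] K) V] : (innerAut k K V).Normal := by
  constructor
  rintro f ⟨a, b, hf⟩ g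
  refine ⟨a, b, fun v => ?_⟩
  show g (f (g.symm v)) = _
  rw [hf, map_smul, g.apply_symm_apply]

/-! The algebra `K ⊗[k] K` acts on `K_σ` through the surjection `a ⊗ b ↦ a * σ b`, so the
bimodule automorphisms of `K_σ ⊕ K_σ` are exactly the `K`-linear automorphisms of `K²`, that is
`GL₂(K)`. Under this identification `v ↦ a • v • b` becomes the scalar matrix `a * σ b`, and every
scalar arises (take `b = 1`), so the inner automorphisms correspond to the centre of `GL₂(K)`. -/

section AutCongr

variable {R S M N : Type*} [CommSemiring R] [Semiring S] [AddCommMonoid M] [AddCommMonoid N]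
  [Module R M] [Module S N]

def LinearEquiv.autCongrOfSurjective (φ : R →+* S) (hφ : Function.Surjective φ) (e : M ≃+ N)
    (he : ∀ (r : R) (m : M), e (r • m) = φ r • e m) : (M ≃ₗ[R] M) ≃* (N ≃ₗ[S] N) where
  toFun f :=
    { e.symm.trans (f.toAddEquiv.trans e) with
      map_smul' := fun s n => by
        obtain ⟨r, rfl⟩ := hφ s
        have hsymm : e.symm (φ r • n) = r • e.symm n :=
          e.symm_apply_eq.mpr (by rw [he, e.apply_symm_apply])
        simp [hsymm, he] }
  invFun g :=
    { e.trans (g.toAddEquiv.trans e.symm) with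
      map_smul' := fun r m => e.injective (by simp [he]) }
  left_inv f := by ext; simp
  right_inv g := by ext; simp
  map_mul' f g := by ext; simp

end AutCongr

lemma Matrix.GeneralLinearGroup.toLin'_scalar_apply {n R V : Type*} [Fintype n] [DecidableEq n]
    [CommRing R] [AddCommGroup V] [Module R V] (b : Module.Basis n R V) (c : Rˣ) (v : V) :
    (toLin' b (scalar n c)).toLinearEquiv v = (c : R) • v := by
  simp [toLin'_apply, Fintype.linearCombination_apply, b.sum_repr]

namespace Kst

variable {k K} (σ : K ≃ₐ[k] K)

abbrev actionHom : K ⊗[k] K →+* K :=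
  (Algebra.TensorProduct.productMap (AlgHom.id k K) σ.toAlgHom).toRingHom

lemma actionHom_tmul (a b : K) : actionHom σ (a ⊗ₜ b) = a * σ b := by simp

lemma actionHom_surjective : Function.Surjective (actionHom σ) :=
  fun a => ⟨a ⊗ₜ 1, by simp⟩

def prodAddEquiv : (Kst k K σ × Kst k K σ) ≃+ K × K := AddEquiv.refl _

lemma prodAddEquiv_smul (r : K ⊗[k] K) (v : Kst k K σ × Kst k K σ) :
    prodAddEquiv σ (r • v) = actionHom σ r • prodAddEquiv σ v := rfl

def autEquivGL : ((Kst k K σ × Kst k K σ) ≃ₗ[K ⊗[k] K] (Kst k K σ × Kst k K σ)) ≃*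
    Matrix.GeneralLinearGroup (Fin 2) K :=
  (LinearEquiv.autCongrOfSurjective _ (actionHom_surjective σ) _ (prodAddEquiv_smul σ)).trans
    ((LinearMap.GeneralLinearGroup.generalLinearEquiv K (K × K)).symm.trans
      (Matrix.GeneralLinearGroup.toLin' (Module.Basis.finTwoProd K)).symm)

lemma autEquivGL_symm_scalar (c : Kˣ) (v : Kst k K σ × Kst k K σ) :
    (autEquivGL σ).symm (Matrix.GeneralLinearGroup.scalar (Fin 2) c) v =
      ((c : K) ⊗ₜ[k] (1 : K)) • v := by
  apply (prodAddEquiv σ).injective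
  rw [prodAddEquiv_smul, actionHom_tmul, map_one, mul_one]
  exact Matrix.GeneralLinearGroup.toLin'_scalar_apply (Module.Basis.finTwoProd K) c
    (prodAddEquiv σ v)

lemma tmul_smul_prod_eq_mul_tmul_one_smul (a b : K) (v : Kst k K σ × Kst k K σ) :
    (a ⊗ₜ[k] b) • v = ((a * σ b) ⊗ₜ[k] (1 : K)) • v :=
  (prodAddEquiv σ).injective (by simp only [prodAddEquiv_smul, actionHom_tmul, map_one, mul_one])

lemma map_innerAut_autEquivGL :
    (innerAut k K (Kst k K σ × Kst k K σ)).map (autEquivGL σ).toMonoidHom =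
      Subgroup.center (Matrix.GeneralLinearGroup (Fin 2) K) := by
  rw [Matrix.GeneralLinearGroup.center_eq_range_scalar]
  ext A
  constructor
  · rintro ⟨f, ⟨a, b, hf⟩, rfl⟩
    refine ⟨a * Units.map σ b, (autEquivGL σ).symm_apply_eq.mp (LinearEquiv.ext fun v => ?_)⟩
    rw [autEquivGL_symm_scalar, hf, tmul_smul_prod_eq_mul_tmul_one_smul σ (a : K)]
    rfl
  · rintro ⟨c, rfl⟩
    refine ⟨(autEquivGL σ).symm (Matrix.GeneralLinearGroup.scalar _ c), ⟨c, 1, fun v => ?_⟩,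
      (autEquivGL σ).apply_symm_apply _⟩
    simpa only [Units.val_one] using autEquivGL_symm_scalar σ c v

end Kst

variable [PerfectField k] [FiniteDimensional k K]

theorem autV_eq_pgl2 (σ : K ≃ₐ[k] K) :
    Nonempty
      ((((Kst k K σ × Kst k K σ) ≃ₗ[K ⊗[k] K] (Kst k K σ × Kst k K σ)) ⧸
          innerAut k K (Kst k K σ × Kst k K σ)) ≃*
        (Matrix.GeneralLinearGroup (Fin 2) K ⧸
          Subgroup.center (Matrix.GeneralLinearGroup (Fin 2) K))) :=
  ⟨QuotientGroup.congr _ _ (Kst.autEquivGL σ) (Kst.map_innerAut_autEquivGL σ)⟩
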